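/- There do not exist integers x and y such that the lens space L(2x(1-4y)+6y-1, x(1-4y)+y) is homeomorphic to L(111, 68). Equivalently, for all integers x, y, setting p = 2x(1-4y)+6y-1 and q = x(1-4y)+y, it is not the case that |p| = 111 and (q ≡ ±68 mod 111 or 68·q ≡ ±1 mod 111). -/

import Mathlib

/-!
Write `p = 2x(1-4y) + 6y - 1`, `q = x(1-4y) + y` and `d = 1 - 4y`. Then `2q = p + d` and
`d (4x - 3) = 2p - 1`, so modulo `p = ±111` the residue `2q ≡ d` comes from a divisor `d` of
`221 = 13 · 17` or of `-223`, i.e. `2q ≡ ±1, ±13, ±17`. The lens space `L(111, 68)` would instead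
require `2q ≡ ±2 · 68 ≡ ±25` or `2q ≡ ±2 · 68⁻¹ ≡ ±49 (mod 111)`.
-/

namespace LensFamily

def p (x y : ℤ) : ℤ := 2 * x * (1 - 4 * y) + 6 * y - 1

def q (x y : ℤ) : ℤ := x * (1 - 4 * y) + y

theorem two_mul_q (x y : ℤ) : 2 * q x y = p x y + (1 - 4 * y) := by
  unfold p q; ring

theorem dvd_two_mul_p_sub_one (x y : ℤ) : 1 - 4 * y ∣ 2 * p x y - 1 :=
  ⟨4 * x - 3, by unfold p; ring⟩

end LensFamily

open LensFamily in
theorem stmt9 (x y : ℤ) :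
    ¬(|2 * x * (1 - 4 * y) + 6 * y - 1| = 111 ∧
      ((x * (1 - 4 * y) + y ≡ 68 [ZMOD 111] ∨ x * (1 - 4 * y) + y ≡ -68 [ZMOD 111]) ∨
        (68 * (x * (1 - 4 * y) + y) ≡ 1 [ZMOD 111] ∨
          68 * (x * (1 - 4 * y) + y) ≡ -1 [ZMOD 111]))) := by
  change ¬(|p x y| = 111 ∧ ((q x y ≡ 68 [ZMOD 111] ∨ q x y ≡ -68 [ZMOD 111]) ∨
    (68 * q x y ≡ 1 [ZMOD 111] ∨ 68 * q x y ≡ -1 [ZMOD 111])))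
  rintro ⟨hp, hq⟩
  have h2q := two_mul_q x y
  have hd : 1 - 4 * y ∈ Int.divisors (2 * p x y - 1) :=
    Int.mem_divisors.2 ⟨dvd_two_mul_p_sub_one x y, by omega⟩
  simp only [Int.ModEq] at hq
  rcases (abs_eq (by norm_num)).1 hp with hp | hp
  · rw [hp, show (2 * 111 - 1 : ℤ).divisors = {1, 13, 17, 221, -1, -13, -17, -221} by decide] at hd
    simp only [Finset.mem_insert, Finset.mem_singleton] at hd
    omega
  · rw [hp, show (2 * -111 - 1 : ℤ).divisors = {1, 223, -1, -223} by decide] at hd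
    simp only [Finset.mem_insert, Finset.mem_singleton] at hd
    omega
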